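/- arXiv:2212.13812 — 7 statements merged into one kernel-verified Lean document; each statement's English description precedes it below -/
import Mathlib

section
/- For any positive integers n and k, the minimum number of rows m*(n,2) of a binary m×n matrix in which every set of at most 2 columns contains a row of weight exactly one equals ⌈log₂(n+1)⌉. -/
/-- `M` is `d`-decodable: every nonempty set of at most `d` columns contains a
row of weight exactly one. -/
def IsDecodable {m n : ℕ} (M : Fin m → Fin n → Bool) (d : ℕ) : Prop :=
  ∀ S : Finset (Fin n), S.Nonempty → S.card ≤ d →
    ∃ i : Fin m, (S.filter (fun j => M i j = true)).card = 1

/-- `m*(n,d)`: the minimum number of rows of a `d`-decodable binary matrix with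
`n` columns. -/
noncomputable def mStar (n d : ℕ) : ℕ :=
  sInf {m | ∃ M : Fin m → Fin n → Bool, IsDecodable M d}

/-!
A set of at most two columns has a row of weight one iff it is a single nonzero column or two
distinct columns. So `2`-decodable matrices with `m` rows and `n` columns are exactly injective
maps from the columns into the `2 ^ m - 1` nonzero vectors of `Bool ^ m`, which exist iff
`n + 1 ≤ 2 ^ m`; the least such `m` is `Nat.clog 2 (n + 1)`.
-/

namespace Finset

variable {α : Type*} (f : α → Bool)

theorem card_filter_singleton_eq_one_iff (a : α) :
    (({a} : Finset α).filter (fun j => f j = true)).card = 1 ↔ f a = true := by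
  by_cases h : f a = true <;> simp [filter_singleton, h]

theorem card_filter_pair_eq_one_iff [DecidableEq α] {a b : α} (hab : a ≠ b) :
    (({a, b} : Finset α).filter (fun j => f j = true)).card = 1 ↔ f a ≠ f b := by
  cases ha : f a <;> cases hb : f b <;> simp [filter_insert, filter_singleton, ha, hb, hab]

end Finset

theorem isDecodable_two_iff {m n : ℕ} (M : Fin m → Fin n → Bool) :
    IsDecodable M 2 ↔
      (∀ j, (fun i => M i j) ≠ fun _ => false) ∧ Function.Injective fun j i => M i j := by
  constructor
  · intro hM
    refine ⟨fun j hj => ?_, fun a b hab => ?_⟩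
    · obtain ⟨i, hi⟩ := hM {j} (Finset.singleton_nonempty j) (by simp)
      rw [Finset.card_filter_singleton_eq_one_iff] at hi
      simpa [hi] using congrFun hj i
    · by_contra hne
      obtain ⟨i, hi⟩ := hM {a, b} (Finset.insert_nonempty a {b}) Finset.card_le_two
      exact (Finset.card_filter_pair_eq_one_iff _ hne).1 hi (congrFun hab i)
  · rintro ⟨hnz, hinj⟩ S hS hcard
    obtain hS1 | hS2 : S.card = 1 ∨ S.card = 2 := by have := hS.card_pos; omega
    · obtain ⟨j, rfl⟩ := Finset.card_eq_one.1 hS1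
      obtain ⟨i, hi⟩ := Function.ne_iff.1 (hnz j)
      exact ⟨i, (Finset.card_filter_singleton_eq_one_iff _ j).2 (by simpa using hi)⟩
    · obtain ⟨a, b, hab, rfl⟩ := Finset.card_eq_two.1 hS2
      obtain ⟨i, hi⟩ := Function.ne_iff.1 (hinj.ne hab)
      exact ⟨i, (Finset.card_filter_pair_eq_one_iff _ hab).2 hi⟩

theorem card_subtype_ne_const_false (m : ℕ) :
    Fintype.card {v : Fin m → Bool // v ≠ fun _ => false} = 2 ^ m - 1 := by
  rw [Fintype.card_subtype_compl, Fintype.card_subtype_eq, Fintype.card_fun, Fintype.card_bool,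
    Fintype.card_fin]

theorem exists_isDecodable_two_iff_nonempty_embedding {m n : ℕ} :
    (∃ M : Fin m → Fin n → Bool, IsDecodable M 2) ↔
      Nonempty (Fin n ↪ {v : Fin m → Bool // v ≠ fun _ => false}) := by
  simp only [isDecodable_two_iff]
  constructor
  · rintro ⟨M, hnz, hinj⟩
    exact ⟨⟨fun j => ⟨fun i => M i j, hnz j⟩, fun a b h => hinj (congrArg Subtype.val h)⟩⟩
  · rintro ⟨e⟩
    exact ⟨fun i j => (e j).1 i, fun j => (e j).2, fun a b h => e.injective (Subtype.ext h)⟩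

theorem exists_isDecodable_two_iff {m n : ℕ} :
    (∃ M : Fin m → Fin n → Bool, IsDecodable M 2) ↔ n + 1 ≤ 2 ^ m := by
  rw [exists_isDecodable_two_iff_nonempty_embedding, Function.Embedding.nonempty_iff_card_le,
    card_subtype_ne_const_false, Fintype.card_fin]
  have := @Nat.one_le_two_pow m
  omega

theorem mStar_two_general (n : ℕ) :
    mStar n 2 = Nat.clog 2 (n + 1) := by
  have hset :
      {m | ∃ M : Fin m → Fin n → Bool, IsDecodable M 2} = Set.Ici (Nat.clog 2 (n + 1)) := by
    ext m
    simp [exists_isDecodable_two_iff, Nat.clog_le_iff_le_pow]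
  rw [mStar, hset, csInf_Ici]

theorem mStar_two (n k : ℕ) (hn : 1 ≤ n) (hk : 1 ≤ k) :
    mStar n 2 = Nat.clog 2 (n + 1) :=
  mStar_two_general n
end

section
/- Let M be the m×n binary incidence matrix of an incidence structure of m points and n blocks, where each block contains exactly k points and any two distinct blocks intersect in at most γ points. Then every stopping set S of M satisfies |S| ≥ k/γ + 1; consequently M is ⌈k/γ⌉-decodable. -/
/-- A stopping set: a nonempty set of columns whose submatrix has no row of
weight exactly one. -/
def IsStoppingSet {m n : ℕ} (M : Fin m → Fin n → Bool) (S : Finset (Fin n)) : Prop :=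
  S.Nonempty ∧ ∀ i : Fin m, (S.filter (fun j => M i j = true)).card ≠ 1

section StoppingSet

open Finset

variable {m n : ℕ} {M : Fin m → Fin n → Bool} {S : Finset (Fin n)}

theorem isDecodable_iff {d : ℕ} :
    IsDecodable M d ↔ ∀ S, IsStoppingSet M S → d < S.card := by
  simp only [IsDecodable, IsStoppingSet]
  constructor
  · rintro hdec S ⟨hne, hstop⟩
    by_contra! hle
    obtain ⟨i, hi⟩ := hdec S hne hle
    exact hstop i hi
  · intro hlt S hne hle
    by_contra! hstop
    exact (hlt S ⟨hne, hstop⟩).not_ge hle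

theorem IsStoppingSet.exists_ne_of_mem (hS : IsStoppingSet M S) {j₀ : Fin n} (hj₀ : j₀ ∈ S)
    {i : Fin m} (hi : M i j₀ = true) : ∃ j ∈ S, j ≠ j₀ ∧ M i j = true := by
  have hmem : j₀ ∈ S.filter (fun j => M i j = true) := mem_filter.mpr ⟨hj₀, hi⟩
  have htwo : 1 < (S.filter (fun j => M i j = true)).card := by
    have := card_pos.mpr ⟨j₀, hmem⟩
    have := hS.2 i
    omega
  obtain ⟨j, hj, hne⟩ := exists_mem_ne htwo j₀
  exact ⟨j, (mem_filter.mp hj).1, hne, (mem_filter.mp hj).2⟩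

theorem IsStoppingSet.filter_subset_biUnion (hS : IsStoppingSet M S) {j₀ : Fin n}
    (hj₀ : j₀ ∈ S) :
    univ.filter (fun i => M i j₀ = true) ⊆
      (S.erase j₀).biUnion (fun j => univ.filter (fun i => M i j₀ = true ∧ M i j = true)) := by
  intro i hi
  have hi : M i j₀ = true := (mem_filter.mp hi).2
  obtain ⟨j, hj, hne, hij⟩ := hS.exists_ne_of_mem hj₀ hi
  exact mem_biUnion.mpr ⟨j, mem_erase.mpr ⟨hne, hj⟩, mem_filter.mpr ⟨mem_univ i, hi, hij⟩⟩

theorem IsStoppingSet.le_card_sub_one_mul {k γ : ℕ} (hS : IsStoppingSet M S)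
    (hk : ∀ j, (univ.filter (fun i => M i j = true)).card = k)
    (hint : ∀ j₁ j₂ : Fin n, j₁ ≠ j₂ →
      (univ.filter (fun i => M i j₁ = true ∧ M i j₂ = true)).card ≤ γ) :
    k ≤ (S.card - 1) * γ := by
  obtain ⟨j₀, hj₀⟩ := hS.1
  calc k = (univ.filter (fun i => M i j₀ = true)).card := (hk j₀).symm
    _ ≤ ∑ j ∈ S.erase j₀, (univ.filter (fun i => M i j₀ = true ∧ M i j = true)).card :=
        (card_le_card (hS.filter_subset_biUnion hj₀)).trans card_biUnion_le
    _ ≤ ∑ _j ∈ S.erase j₀, γ :=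
        sum_le_sum fun j hj => hint j₀ j (mem_erase.mp hj).1.symm
    _ = (S.card - 1) * γ := by rw [sum_const, card_erase_of_mem hj₀, smul_eq_mul]

theorem IsStoppingSet.div_add_one_le_card {k γ : ℕ} (hS : IsStoppingSet M S)
    (hk : ∀ j, (univ.filter (fun i => M i j = true)).card = k)
    (hint : ∀ j₁ j₂ : Fin n, j₁ ≠ j₂ →
      (univ.filter (fun i => M i j₁ = true ∧ M i j₂ = true)).card ≤ γ) :
    (k : ℝ) / γ + 1 ≤ S.card := by
  have hpos : 1 ≤ S.card := card_pos.mpr hS.1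
  have hkey : (k : ℝ) ≤ ((S.card : ℝ) - 1) * γ := by
    rw [← Nat.cast_one, ← Nat.cast_sub hpos]
    exact_mod_cast hS.le_card_sub_one_mul hk hint
  have hpos' : (1 : ℝ) ≤ S.card := by exact_mod_cast hpos
  linarith [div_le_of_le_mul₀ γ.cast_nonneg (by linarith) hkey]

end StoppingSet

theorem incidence_stopping_bound_general {m n k γ : ℕ}
    (M : Fin m → Fin n → Bool)
    -- each block (column) contains exactly `k` points
    (hk : ∀ j, (Finset.univ.filter (fun i => M i j = true)).card = k)
    -- any two distinct blocks intersect in at most `γ` points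
    (hint : ∀ j₁ j₂ : Fin n, j₁ ≠ j₂ →
      (Finset.univ.filter (fun i => M i j₁ = true ∧ M i j₂ = true)).card ≤ γ) :
    (∀ S : Finset (Fin n), IsStoppingSet M S → (k : ℝ) / γ + 1 ≤ S.card) ∧
    IsDecodable M ⌈(k : ℝ) / γ⌉₊ := by
  have hbound S (hS : IsStoppingSet M S) := hS.div_add_one_le_card hk hint
  refine ⟨hbound, isDecodable_iff.mpr fun S hS => ?_⟩
  have hceil : (⌈(k : ℝ) / γ⌉₊ : ℝ) < (k : ℝ) / γ + 1 := Nat.ceil_lt_add_one (by positivity)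
  exact_mod_cast hceil.trans_le (hbound S hS)

theorem incidence_stopping_bound {m n k γ : ℕ} (hγ : 0 < γ)
    (M : Fin m → Fin n → Bool)
    -- each block (column) contains exactly `k` points
    (hk : ∀ j, (Finset.univ.filter (fun i => M i j = true)).card = k)
    -- any two distinct blocks intersect in at most `γ` points
    (hint : ∀ j₁ j₂ : Fin n, j₁ ≠ j₂ →
      (Finset.univ.filter (fun i => M i j₁ = true ∧ M i j₂ = true)).card ≤ γ) :
    (∀ S : Finset (Fin n), IsStoppingSet M S → (k : ℝ) / γ + 1 ≤ S.card) ∧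
    IsDecodable M ⌈(k : ℝ) / γ⌉₊ :=
  incidence_stopping_bound_general M hk hint
end

section
/- The incidence matrix of a Steiner system S(t,k,m) is a (⌈k/(t−1)⌉)-decodable matrix with column weight k: every nonempty set of at most ⌈k/(t−1)⌉ blocks, viewed as columns of the incidence matrix, contains a point lying in exactly one of these blocks. -/
theorem steiner_incidence_decodable {m n t k : ℕ} (ht : 2 ≤ t) (htk : t ≤ k)
    (htm : t ≤ m) (B : Fin n → Finset (Fin m))
    -- each block has exactly `k` points
    (hk : ∀ j, (B j).card = k)
    -- every `t`-subset of points lies in exactly one block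
    (hSteiner : ∀ T : Finset (Fin m), T.card = t → ∃! j : Fin n, T ⊆ B j) :
    IsDecodable (fun (i : Fin m) (j : Fin n) => decide (i ∈ B j))
        (⌈(k : ℝ) / (t - 1)⌉₊) ∧
    ∀ j, (Finset.univ.filter
        (fun i => (fun (i : Fin m) (j : Fin n) => decide (i ∈ B j)) i j = true)).card = k := by
  have ht1 : 1 ≤ t := le_trans (by norm_num) ht
  have hkpos : 0 < k := lt_of_lt_of_le (by omega) htk
  set d : ℕ := ⌈(k : ℝ) / (t - 1)⌉₊ with hd
  have htR : (0:ℝ) < (t:ℝ) - 1 := by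
    have : (2:ℝ) ≤ (t:ℝ) := by exact_mod_cast ht
    linarith
  have hxpos : (0:ℝ) < (k:ℝ) / ((t:ℝ) - 1) := by positivity
  have hdpos : 0 < d := Nat.ceil_pos.2 hxpos
  -- key: distinct blocks intersect in ≤ t-1 points
  have hint : ∀ j₁ j₂ : Fin n, j₁ ≠ j₂ → (B j₁ ∩ B j₂).card ≤ t - 1 := by
    intro j₁ j₂ hne
    by_contra h
    push_neg at h
    have h' : t ≤ (B j₁ ∩ B j₂).card := by omega
    obtain ⟨T, hT, hTcard⟩ := Finset.exists_subset_card_eq h'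
    obtain ⟨j, hj, huniq⟩ := hSteiner T hTcard
    have h1 : j₁ = j := huniq j₁ (hT.trans Finset.inter_subset_left)
    have h2 : j₂ = j := huniq j₂ (hT.trans Finset.inter_subset_right)
    exact hne (h1.trans h2.symm)
  -- key: (d-1)*(t-1) < k
  have hlt : (d - 1) * (t - 1) < k := by
    have h1 : (↑(d - 1) : ℝ) < (k:ℝ) / ((t:ℝ) - 1) := by
      rw [← Nat.lt_ceil]; omega
    have h2 : (↑(d - 1) : ℝ) * ((t:ℝ) - 1) < k := by
      rw [← lt_div_iff₀ htR]; exact h1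
    have h3 : ((t:ℝ) - 1) = ((t - 1 : ℕ) : ℝ) := by
      push_cast [Nat.cast_sub ht1]; ring
    rw [h3] at h2
    exact_mod_cast h2
  constructor
  · intro S hS hScard
    obtain ⟨j₀, hj₀⟩ := hS
    set D := (S.erase j₀).biUnion (fun j => B j₀ ∩ B j) with hD
    have hDcard : D.card ≤ (S.card - 1) * (t - 1) := by
      calc D.card ≤ ∑ j ∈ S.erase j₀, (B j₀ ∩ B j).card := Finset.card_biUnion_le
        _ ≤ ∑ j ∈ S.erase j₀, (t - 1) := by
            apply Finset.sum_le_sum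
            intro j hj
            exact hint j₀ j (Ne.symm (Finset.ne_of_mem_erase hj))
        _ = (S.erase j₀).card * (t - 1) := by rw [Finset.sum_const, smul_eq_mul]
        _ = (S.card - 1) * (t - 1) := by rw [Finset.card_erase_of_mem hj₀]
    have hDlt : D.card < (B j₀).card := by
      rw [hk j₀]
      calc D.card ≤ (S.card - 1) * (t - 1) := hDcard
        _ ≤ (d - 1) * (t - 1) := by
            apply Nat.mul_le_mul_right; omega
        _ < k := hlt
    obtain ⟨i, hiB, hiD⟩ : ∃ i ∈ B j₀, i ∉ D := by
      by_contra hcon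
      push_neg at hcon
      exact absurd (Finset.card_le_card hcon) (not_le.2 hDlt)
    refine ⟨i, ?_⟩
    have hfil : S.filter (fun j => decide (i ∈ B j) = true) = {j₀} := by
      ext j
      simp only [Finset.mem_filter, Finset.mem_singleton, decide_eq_true_eq]
      constructor
      · rintro ⟨hjS, hij⟩
        by_contra hne
        exact hiD (Finset.mem_biUnion.2 ⟨j, Finset.mem_erase.2 ⟨hne, hjS⟩,
          Finset.mem_inter.2 ⟨hiB, hij⟩⟩)
      · rintro rfl
        exact ⟨hj₀, hiB⟩
    simp only [hfil, Finset.card_singleton]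
  · intro j
    rw [← hk j]
    congr 1
    ext i
    simp
end

section
/- For all integers n ≥ 2 and 2 ≤ d ≤ n, there exists a binary m×n covering array of strength d with m ≤ d·log₂(n) / log₂(2^d/(2^d−1)); consequently m*(n,d) ≤ d·log₂(n)/log₂(2^d/(2^d−1)). -/
/-- `M` is a binary covering array of strength `d`. -/
def IsCoveringArray {m n : ℕ} (M : Fin m → Fin n → Bool) (d : ℕ) : Prop :=
  ∀ f : Fin d → Fin n, Function.Injective f →
    ∀ v : Fin d → Bool, ∃ i : Fin m, ∀ s, M i (f s) = v s

/-!
A uniformly random row realises a prescribed pattern on `d` prescribed columns with probability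
`2⁻ᵈ`, so by averaging some row realises at least a `2⁻ᵈ` fraction of any family of such
requirements. Choosing rows greedily, `t` rows leave at most `C(n,d) 2ᵈ (1 - 2⁻ᵈ)ᵗ` of the
`C(n,d) 2ᵈ` requirements unmet, and once at most `2ᵈ` are left they are met one row each. With
`r = 2ᵈ / (2ᵈ - 1)` and `t = ⌈log_r C(n,d)⌉` this gives the bound as soon as
`C(n,d) r^(2ᵈ+1) ≤ n^d`, which holds for `d ≥ 3` because `C(n,d) ≤ nᵈ / d!` and
`r^(2ᵈ+1) ≤ 4 ≤ d!`. For `d = 2` that estimate fails, and the binary digits of the column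
indices together with their complements give a covering array with `2 (⌈log₂ n⌉ + 1)` rows.
A covering array of strength `d` is `d`-decodable: extend a set of at most `d` columns to `d`
columns and take a row that is the indicator of one of them.
-/

open Finset Real

theorem IsCoveringArray.isDecodable {m n d : ℕ} {M : Fin m → Fin n → Bool} (hdn : d ≤ n)
    (hM : IsCoveringArray M d) : IsDecodable M d := by
  intro S ⟨j₀, hj₀⟩ hSd
  obtain ⟨S', hSS', hS'⟩ := exists_superset_card_eq hSd (by simpa using hdn)
  let f := S'.orderEmbOfFin hS'
  obtain ⟨i, hi⟩ := hM f f.injective (fun s => decide (f s = j₀))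
  have hrow : ∀ j ∈ S', M i j = decide (j = j₀) := by
    intro j hj
    obtain ⟨s, rfl⟩ : j ∈ Set.range f := by simpa [f] using hj
    exact hi s
  refine ⟨i, card_eq_one.mpr ⟨j₀, ext fun j => ?_⟩⟩
  simp only [mem_filter, mem_singleton]
  constructor
  · rintro ⟨hj, hij⟩
    simpa [hrow j (hSS' hj)] using hij
  · rintro rfl
    simp [hj₀, hrow j (hSS' hj₀)]

theorem mStar_le_of_isDecodable {m n d : ℕ} {M : Fin m → Fin n → Bool} (hM : IsDecodable M d) :
    mStar n d ≤ m :=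
  Nat.sInf_le ⟨M, hM⟩

theorem exists_isCoveringArray_of_rows {ι : Type*} [Fintype ι] {n d : ℕ} (R : ι → Fin n → Bool)
    (hR : ∀ f : Fin d → Fin n, Function.Injective f →
      ∀ v : Fin d → Bool, ∃ i, ∀ s, R i (f s) = v s) :
    ∃ M : Fin (Fintype.card ι) → Fin n → Bool, IsCoveringArray M d := by
  refine ⟨R ∘ (Fintype.equivFin ι).symm, fun f hf v => ?_⟩
  obtain ⟨i, hi⟩ := hR f hf v
  exact ⟨Fintype.equivFin ι i, by simpa using hi⟩

theorem exists_finset_covers {α β : Type*} [DecidableEq α] (covers : α → β → Prop)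
    {E : Finset β} (h : ∀ e ∈ E, ∃ w, covers w e) :
    ∃ R : Finset α, #R ≤ #E ∧ ∀ e ∈ E, ∃ w ∈ R, covers w e := by
  choose g hg using h
  refine ⟨E.attach.image (fun e => g e.1 e.2), card_image_le.trans_eq card_attach, ?_⟩
  exact fun e he => ⟨g e he, mem_image_of_mem _ (mem_attach E ⟨e, he⟩), hg e he⟩

section Greedy

variable {α β : Type*} [Fintype α] (covers : α → β → Prop) [∀ w e, Decidable (covers w e)]

theorem exists_card_le_mul_card_filter_covers [Nonempty α] {k : ℕ} {E : Finset β}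
    (h : ∀ e ∈ E, Fintype.card α ≤ k * #{w | covers w e}) :
    ∃ w, #E ≤ k * #{e ∈ E | covers w e} := by
  have hsum : ∑ _w : α, #E ≤ ∑ w, k * #{e ∈ E | covers w e} :=
    calc ∑ _w : α, #E = ∑ _e ∈ E, Fintype.card α := by simp [mul_comm]
      _ ≤ ∑ e ∈ E, k * #{w | covers w e} := sum_le_sum h
      _ = ∑ w, k * #{e ∈ E | covers w e} := by
        simp only [card_filter, mul_sum]
        exact sum_comm
  obtain ⟨w, -, hw⟩ := exists_le_of_sum_le univ_nonempty hsum
  exact ⟨w, hw⟩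

variable [DecidableEq α]

theorem exists_finset_covers_of_card_mul_pow_le [Nonempty α] {k s : ℕ} (t : ℕ) {E : Finset β}
    (h : ∀ e ∈ E, Fintype.card α ≤ k * #{w | covers w e})
    (hE : #E * (k - 1) ^ t ≤ k ^ t * s) :
    ∃ R : Finset α, #R ≤ t + s ∧ ∀ e ∈ E, ∃ w ∈ R, covers w e := by
  induction t generalizing E with
  | zero =>
    have hcov : ∀ e ∈ E, ∃ w, covers w e := fun e he => by
      obtain ⟨w, hw⟩ :=
        card_pos.mp (Nat.pos_of_mul_pos_left (Fintype.card_pos.trans_le (h e he)))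
      exact ⟨w, (mem_filter.mp hw).2⟩
    obtain ⟨R, hR, hRE⟩ := exists_finset_covers covers hcov
    exact ⟨R, by simpa using hR.trans (by simpa using hE), hRE⟩
  | succ t ih =>
    obtain ⟨w, hw⟩ := exists_card_le_mul_card_filter_covers covers h
    set E' := E.filter (fun e => ¬ covers w e)
    have hsplit : #{e ∈ E | covers w e} + #E' = #E := card_filter_add_card_filter_not _
    have hE' : #E' * (k - 1) ^ t ≤ k ^ t * s := by
      rcases Nat.eq_zero_or_pos k with rfl | hk
      · simp_all [E']
      refine Nat.le_of_mul_le_mul_left ?_ hk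
      calc k * (#E' * (k - 1) ^ t) = k * #E' * (k - 1) ^ t := by ring
        _ ≤ (k - 1) * #E * (k - 1) ^ t := by
          refine Nat.mul_le_mul_right _ ?_
          have : k * #{e ∈ E | covers w e} + k * #E' = k * #E := by rw [← mul_add, hsplit]
          rw [Nat.sub_one_mul]
          exact Nat.le_sub_of_add_le (by omega)
        _ = #E * (k - 1) ^ (t + 1) := by ring
        _ ≤ k ^ (t + 1) * s := hE
        _ = k * (k ^ t * s) := by ring
    obtain ⟨R, hR, hRE⟩ := ih (fun e he => h e (mem_filter.mp he).1) hE'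
    refine ⟨insert w R, (card_insert_le w R).trans (by omega), fun e he => ?_⟩
    by_cases hwe : covers w e
    · exact ⟨w, mem_insert_self w R, hwe⟩
    · obtain ⟨u, hu, hue⟩ := hRE e (mem_filter.mpr ⟨he, hwe⟩)
      exact ⟨u, mem_insert_of_mem hu, hue⟩

end Greedy

theorem card_filter_forall_mem_eq {ι : Type*} [Fintype ι] [DecidableEq ι] (S : Finset ι)
    (g : ι → Bool) : #{w : ι → Bool | ∀ j ∈ S, w j = g j} = 2 ^ #Sᶜ := by
  have : ({w : ι → Bool | ∀ j ∈ S, w j = g j} : Finset _) =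
      Fintype.piFinset (fun j => if j ∈ S then {g j} else univ) := by
    ext w
    simp only [mem_filter, mem_univ, true_and, Fintype.mem_piFinset]
    refine forall_congr' fun j => ?_
    split_ifs with hj <;> simp [hj]
  rw [this, Fintype.card_piFinset]
  simp [apply_ite, prod_ite, ← compl_filter]

section PatternEvents

variable {n : ℕ}

/-- `⟨S, T⟩` with `T ⊆ S` stands for the requirement that a row restricted to the columns `S`
be the indicator of `T`. -/
def patternEvents (n d : ℕ) : Finset ((_ : Finset (Fin n)) × Finset (Fin n)) :=
  (powersetCard d univ).sigma powerset

abbrev MatchesPattern (w : Fin n → Bool) (e : (_ : Finset (Fin n)) × Finset (Fin n)) : Prop :=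
  ∀ j ∈ e.1, w j = decide (j ∈ e.2)

theorem card_patternEvents (d : ℕ) : #(patternEvents n d) = n.choose d * 2 ^ d := by
  rw [patternEvents, card_sigma, sum_congr rfl fun S hS => by
    rw [card_powerset, (mem_powersetCard.mp hS).2], sum_const, card_powersetCard, card_univ,
    Fintype.card_fin, smul_eq_mul]

theorem two_pow_eq_two_pow_mul_card_matchesPattern {d : ℕ} {e} (he : e ∈ patternEvents n d) :
    2 ^ n = 2 ^ d * #{w | MatchesPattern w e} := by
  have hd : #e.1 = d := (mem_powersetCard.mp (mem_sigma.mp he).1).2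
  have hdn : d ≤ n := by simpa [← hd] using card_le_univ e.1
  have hcount : #{w | MatchesPattern w e} = 2 ^ #e.1ᶜ := by
    convert card_filter_forall_mem_eq e.1 fun j => decide (j ∈ e.2)
  rw [hcount, card_compl, Fintype.card_fin, hd, ← pow_add, Nat.add_sub_cancel' hdn]

theorem exists_isCoveringArray_of_matchesPattern {d : ℕ} (R : Finset (Fin n → Bool))
    (hR : ∀ e ∈ patternEvents n d, ∃ w ∈ R, MatchesPattern w e) :
    ∃ M : Fin #R → Fin n → Bool, IsCoveringArray M d := by
  rw [← Fintype.card_coe]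
  refine exists_isCoveringArray_of_rows (fun w : R => w.1) fun f hf v => ?_
  let f' : Fin d ↪ Fin n := ⟨f, hf⟩
  obtain ⟨w, hwR, hw⟩ :=
    hR ⟨univ.map f', (univ.filter fun s => v s).map f'⟩ (by simp [patternEvents, f'])
  exact ⟨⟨w, hwR⟩, fun s => by simpa [f'] using hw (f s) (by simp [f'])⟩

theorem exists_isCoveringArray_of_choose_mul_pow_le {d t : ℕ}
    (h : n.choose d * (2 ^ d - 1) ^ t ≤ (2 ^ d) ^ t) :
    ∃ m ≤ t + 2 ^ d, ∃ M : Fin m → Fin n → Bool, IsCoveringArray M d := by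
  obtain ⟨R, hR, hRE⟩ := exists_finset_covers_of_card_mul_pow_le MatchesPattern t
    (fun e he => (two_pow_eq_two_pow_mul_card_matchesPattern he).le.trans_eq' (by simp))
    (by rw [card_patternEvents, mul_right_comm]; exact Nat.mul_le_mul_right _ h)
  exact ⟨#R, hR, exists_isCoveringArray_of_matchesPattern R hRE⟩

end PatternEvents

theorem exists_nat_le_pow_and_add_le_logb {r C N : ℝ} (hr : 1 < r) (hC : 1 ≤ C) {s : ℕ}
    (h : C * r ^ (s + 1) ≤ N) : ∃ t : ℕ, C ≤ r ^ t ∧ (t + s : ℝ) ≤ logb r N := by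
  have hx : 0 ≤ logb r C := logb_nonneg hr hC
  refine ⟨⌈logb r C⌉₊, ?_, ?_⟩
  · calc C = r ^ logb r C := (rpow_logb (by positivity) hr.ne' (by positivity)).symm
      _ ≤ r ^ (⌈logb r C⌉₊ : ℝ) := rpow_le_rpow_of_exponent_le hr.le (Nat.le_ceil _)
      _ = r ^ ⌈logb r C⌉₊ := rpow_natCast r _
  · calc (⌈logb r C⌉₊ + s : ℝ) ≤ logb r C + (s + 1) := by
          linarith [Nat.ceil_lt_add_one hx]
      _ = logb r (C * r ^ (s + 1)) := by
          rw [logb_mul (by positivity) (by positivity), logb_pow, logb_self_eq_one hr]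
          push_cast
          ring
      _ ≤ logb r N := logb_le_logb_of_le hr (by positivity) h

theorem div_sub_one_pow_succ_le_four {K : ℕ} (hK : 8 ≤ K) :
    ((K : ℝ) / (K - 1)) ^ (K + 1) ≤ 4 := by
  have hK' : (8 : ℝ) ≤ K := by exact_mod_cast hK
  have hpos : (0 : ℝ) < K - 1 := by linarith
  calc ((K : ℝ) / (K - 1)) ^ (K + 1) = (1 / (K - 1) + 1) ^ (K + 1) := by
        congr 1
        field_simp
        ring
    _ ≤ exp (1 / (K - 1)) ^ (K + 1) := by
        gcongr
        exact add_one_le_exp _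
    _ = exp ((K + 1) / (K - 1)) := by
        rw [← exp_nat_mul]
        congr 1
        push_cast
        ring
    _ ≤ exp (2 * log 2) := by
        gcongr
        rw [div_le_iff₀ hpos]
        nlinarith [log_two_gt_d9]
    _ = 4 := by
        rw [two_mul, exp_add, exp_log two_pos]
        norm_num

theorem choose_mul_pow_le_pow {n d : ℕ} (hd : 3 ≤ d) :
    (n.choose d : ℝ) * ((2 ^ d : ℝ) / (2 ^ d - 1)) ^ (2 ^ d + 1) ≤ n ^ d := by
  have h8 : 8 ≤ 2 ^ d := by simpa using Nat.pow_le_pow_right two_pos hd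
  have hr : ((2 ^ d : ℝ) / (2 ^ d - 1)) ^ (2 ^ d + 1) ≤ 4 := by
    exact_mod_cast div_sub_one_pow_succ_le_four h8
  have hfac : (4 : ℝ) ≤ d.factorial := by
    exact_mod_cast (show 4 ≤ Nat.factorial 3 by decide).trans (Nat.factorial_le hd)
  calc (n.choose d : ℝ) * ((2 ^ d : ℝ) / (2 ^ d - 1)) ^ (2 ^ d + 1)
      ≤ (n ^ d / d.factorial) * d.factorial :=
        mul_le_mul (Nat.choose_le_pow_div d n) (hr.trans hfac)
          (pow_nonneg (div_nonneg (by positivity) (sub_nonneg.mpr (one_le_pow₀ one_le_two))) _)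
          (by positivity)
    _ = n ^ d := div_mul_cancel₀ _ (by positivity)

theorem four_thirds_pow_le (k : ℕ) : (4 / 3 : ℝ) ^ (k + 2) ≤ 2 ^ k + 1 := by
  induction k with
  | zero => norm_num
  | succ k ih =>
    have : (1 : ℝ) ≤ 2 ^ k := one_le_pow₀ one_le_two
    calc (4 / 3 : ℝ) ^ (k + 1 + 2) = 4 / 3 * (4 / 3) ^ (k + 2) := by ring
      _ ≤ 4 / 3 * (2 ^ k + 1) := by gcongr
      _ ≤ 2 ^ (k + 1) + 1 := by rw [pow_succ]; linarith

theorem clog_two_add_one_le_logb {n : ℕ} (hn : 2 ≤ n) :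
    (Nat.clog 2 n + 1 : ℝ) ≤ logb (4 / 3) n := by
  obtain ⟨k, hk⟩ : ∃ k, Nat.clog 2 n = k + 1 :=
    Nat.exists_eq_add_one.mpr (Nat.clog_pos one_lt_two hn)
  have hlt : 2 ^ k < n := by simpa [hk] using Nat.pow_pred_clog_lt_self one_lt_two hn
  rw [le_logb_iff_rpow_le (by norm_num) (by positivity), hk]
  norm_cast
  calc (4 / 3 : ℝ) ^ (k + 1 + 1) ≤ 2 ^ k + 1 := four_thirds_pow_le k
    _ ≤ n := by exact_mod_cast hlt

theorem exists_isCoveringArray_of_three_le {n d : ℕ} (hd : 3 ≤ d) (hdn : d ≤ n) :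
    ∃ m : ℕ, (m : ℝ) ≤ d * logb ((2 ^ d : ℝ) / (2 ^ d - 1)) n ∧
      ∃ M : Fin m → Fin n → Bool, IsCoveringArray M d := by
  have hpos : (0 : ℝ) < 2 ^ d - 1 := by
    linarith [one_lt_pow₀ (one_lt_two : (1 : ℝ) < 2) (by omega : d ≠ 0)]
  have hr : 1 < (2 ^ d : ℝ) / (2 ^ d - 1) := by
    rw [one_lt_div hpos]
    linarith
  obtain ⟨t, hCt, ht⟩ := exists_nat_le_pow_and_add_le_logb hr
    (by exact_mod_cast Nat.choose_pos hdn) (choose_mul_pow_le_pow hd)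
  have hnat : n.choose d * (2 ^ d - 1) ^ t ≤ (2 ^ d) ^ t := by
    rw [div_pow, le_div_iff₀ (by positivity)] at hCt
    rw [← Nat.cast_le (α := ℝ)]
    push_cast [Nat.cast_sub Nat.one_le_two_pow]
    exact hCt
  obtain ⟨m, hm, M, hM⟩ := exists_isCoveringArray_of_choose_mul_pow_le hnat
  refine ⟨m, ?_, M, hM⟩
  rw [← logb_pow]
  exact (Nat.cast_le.mpr hm).trans (by exact_mod_cast ht)

theorem exists_testBit_ne_of_lt_two_pow {a b c : ℕ} (ha : a < 2 ^ c) (hb : b < 2 ^ c)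
    (hab : a ≠ b) : ∃ p < c, a.testBit p ≠ b.testBit p := by
  by_contra! h
  refine hab (Nat.eq_of_testBit_eq fun p => ?_)
  rcases lt_or_ge p c with hp | hp
  · exact h p hp
  · have hcp := Nat.pow_le_pow_right two_pos hp
    rw [Nat.testBit_lt_two_pow (ha.trans_le hcp), Nat.testBit_lt_two_pow (hb.trans_le hcp)]

/-- The rows are the binary digits of the column index and their complements; digit number
`clog 2 n` vanishes on every column and so yields the two constant rows. -/
theorem exists_isCoveringArray_two {n : ℕ} (hn : 2 ≤ n) :
    ∃ m : ℕ, (m : ℝ) ≤ 2 * logb (4 / 3) n ∧ ∃ M : Fin m → Fin n → Bool, IsCoveringArray M 2 := by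
  set c := Nat.clog 2 n
  have hlt : ∀ j : Fin n, (j : ℕ) < 2 ^ c := fun j => j.2.trans_le (Nat.le_pow_clog one_lt_two n)
  obtain ⟨M, hM⟩ := exists_isCoveringArray_of_rows (d := 2)
    (fun (pb : Fin (c + 1) × Bool) (j : Fin n) => xor ((j : ℕ).testBit pb.1) pb.2) <| by
    intro f hf v
    obtain ⟨p, hpc, hp⟩ : ∃ p ≤ c,
        ((f 0 : ℕ).testBit p = (f 1 : ℕ).testBit p ↔ v 0 = v 1) := by
      by_cases hv : v 0 = v 1
      · exact ⟨c, le_rfl, by simp [hv, Nat.testBit_lt_two_pow (hlt _)]⟩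
      · obtain ⟨p, hp, hne⟩ := exists_testBit_ne_of_lt_two_pow (hlt (f 0)) (hlt (f 1))
          (Fin.val_ne_of_ne (hf.ne zero_ne_one))
        exact ⟨p, hp.le, by simp [hv, hne]⟩
    have key : ∀ x₀ x₁ v₀ v₁ : Bool, (x₀ = x₁ ↔ v₀ = v₁) → xor x₁ (xor x₀ v₀) = v₁ := by decide
    exact ⟨(⟨p, by omega⟩, xor ((f 0 : ℕ).testBit p) (v 0)),
      Fin.forall_fin_two.mpr ⟨by simp, key _ _ _ _ hp⟩⟩
  refine ⟨_, ?_, M, hM⟩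
  simpa [mul_comm] using mul_le_mul_of_nonneg_left (clog_two_add_one_le_logb hn) zero_le_two

theorem covering_array_exists_general (n d : ℕ) (hd2 : 2 ≤ d) (hdn : d ≤ n) :
    (∃ m : ℕ, (m : ℝ) ≤ d * Real.logb 2 n /
        Real.logb 2 ((2 ^ d : ℝ) / ((2 : ℝ) ^ d - 1)) ∧
      ∃ M : Fin m → Fin n → Bool, IsCoveringArray M d) ∧
    (mStar n d : ℝ) ≤ d * Real.logb 2 n /
        Real.logb 2 ((2 ^ d : ℝ) / ((2 : ℝ) ^ d - 1)) := by
  have hbound : (d : ℝ) * logb 2 n / logb 2 ((2 ^ d : ℝ) / ((2 : ℝ) ^ d - 1)) =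
      d * logb ((2 ^ d : ℝ) / (2 ^ d - 1)) n := by
    rw [mul_div_assoc, logb, logb, logb, div_div_div_cancel_right₀ (log_pos one_lt_two).ne']
  obtain ⟨m, hm, M, hM⟩ : ∃ m : ℕ, (m : ℝ) ≤ d * logb ((2 ^ d : ℝ) / (2 ^ d - 1)) n ∧
      ∃ M : Fin m → Fin n → Bool, IsCoveringArray M d := by
    rcases hd2.eq_or_lt with rfl | hd3
    · simpa [show (2 ^ 2 / (2 ^ 2 - 1) : ℝ) = 4 / 3 by norm_num] using
        exists_isCoveringArray_two hdn
    · exact exists_isCoveringArray_of_three_le hd3 hdn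
  rw [hbound]
  have hmStar : mStar n d ≤ m := mStar_le_of_isDecodable (hM.isDecodable hdn)
  exact ⟨⟨m, hm, M, hM⟩, (Nat.cast_le.mpr hmStar).trans hm⟩

theorem covering_array_exists (n d : ℕ) (hn : 2 ≤ n) (hd2 : 2 ≤ d) (hdn : d ≤ n) :
    (∃ m : ℕ, (m : ℝ) ≤ d * Real.logb 2 n /
        Real.logb 2 ((2 ^ d : ℝ) / ((2 : ℝ) ^ d - 1)) ∧
      ∃ M : Fin m → Fin n → Bool, IsCoveringArray M d) ∧
    (mStar n d : ℝ) ≤ d * Real.logb 2 n /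
        Real.logb 2 ((2 ^ d : ℝ) / ((2 : ℝ) ^ d - 1)) :=
  covering_array_exists_general n d hd2 hdn
end

section
/- For any n ≥ 3, m*(n,3) ≤ ⌈(3/log₂ 3)·log₂ n⌉: there exists a 3-decodable binary matrix with n columns and at most ⌈(3/log₂3)·log₂ n⌉ ≈ ⌈1.89·log₂ n⌉ rows. -/
/-!
Put three copies of a `3`-decodable matrix side by side, put the unit vector `e a` above the
`a`-th copy, and add the three columns `(e a, 0)`. For a set `S` of at most three columns,
either one of the three new rows meets `S` exactly once, or all columns of `S` carry the same
`e a`; then `S` has at least two columns, at most one of them new, and the lower halves of the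
others are distinct columns of the old matrix, decoded by one of its rows. So `m + 3` rows carry
`3 + 3 N` columns when `m` rows carry `N`, i.e. about `3 ^ (m / 3)` columns: `n` columns need
only `3 log₃ n = (3 / log₂ 3) log₂ n` rows.
-/

open Finset

section Decodable

variable {ι κ : Type*}

/-- `IsDecodable` for arbitrary row and column types; on `Fin m` and `Fin n` the two agree
definitionally. -/
def Decodable (M : ι → κ → Bool) (d : ℕ) : Prop :=
  ∀ S : Finset κ, S.Nonempty → S.card ≤ d → ∃ i, (S.filter (fun j => M i j = true)).card = 1

theorem Decodable.comp {ι' κ' : Type*} {M : ι → κ → Bool} {d : ℕ} (hM : Decodable M d)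
    {r : ι' → ι} (hr : r.Surjective) (c : κ' ↪ κ) : Decodable (fun i j => M (r i) (c j)) d := by
  intro S hS hd
  obtain ⟨i, hi⟩ := hM (S.map c) hS.map (by simpa using hd)
  obtain ⟨i', rfl⟩ := hr i
  exact ⟨i', by rwa [filter_map, card_map] at hi⟩

theorem decodable_decide_eq [DecidableEq ι] (d : ℕ) :
    Decodable (fun i j : ι => decide (i = j)) d := by
  rintro S ⟨j, hj⟩ -
  refine ⟨j, card_eq_one.2 ⟨j, ?_⟩⟩
  ext j'
  simp only [mem_filter, decide_eq_true_eq, mem_singleton]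
  exact ⟨fun h => h.2.symm, by rintro rfl; exact ⟨hj, rfl⟩⟩

theorem mStar_le_of_decodable [Fintype ι] {M : ι → κ → Bool} {d n : ℕ} (hM : Decodable M d)
    (c : Fin n ↪ κ) : mStar n d ≤ Fintype.card ι :=
  Nat.sInf_le ⟨_, hM.comp (Fintype.equivFin ι).symm.surjective c⟩

end Decodable

theorem Finset.apply_eq_of_card_filter_ne_one {α β : Type*} [DecidableEq α] {S : Finset β}
    (f : β → α) (hS : S.card ≤ 3) (h : ∀ a, (S.filter (f · = a)).card ≠ 1) {x y : β}
    (hx : x ∈ S) (hy : y ∈ S) : f x = f y := by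
  have two_le : ∀ z ∈ S, 2 ≤ (S.filter (f · = f z)).card := fun z hz => by
    have : 0 < (S.filter (f · = f z)).card := card_pos.2 ⟨z, mem_filter.2 ⟨hz, rfl⟩⟩
    have := h (f z)
    omega
  by_contra hxy
  have hsub : S.filter (f · = f y) ⊆ S.filter (fun z => ¬ f z = f x) := by
    intro z
    simp only [mem_filter]
    exact fun ⟨hz, e⟩ => ⟨hz, e ▸ Ne.symm hxy⟩
  have := card_le_card hsub
  have := card_filter_add_card_filter_not (s := S) (f · = f x)
  have := two_le x hx
  have := two_le y hy
  omega

section Extension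

variable {α ι κ : Type*}

def columnSymbol : α ⊕ α × κ → α := Sum.elim id Prod.fst

def lowerColumn (a : α) : κ ↪ α ⊕ α × κ :=
  (Function.Embedding.sectR a κ).trans .inr

@[simp] theorem lowerColumn_apply (a : α) (c : κ) : lowerColumn a c = .inr (a, c) := rfl

variable [DecidableEq α]

/-- Column `inl a` is the unit vector `a` over zeros; column `inr (a, c)` is the unit vector `a`
over column `c` of `M`. -/
def extendMatrix (M : ι → κ → Bool) : α ⊕ ι → α ⊕ α × κ → Bool
  | .inl a, j => decide (columnSymbol j = a)
  | .inr _, .inl _ => false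
  | .inr i, .inr (_, c) => M i c

@[simp] theorem extendMatrix_inl (M : ι → κ → Bool) (a : α) (j : α ⊕ α × κ) :
    extendMatrix M (.inl a) j = decide (columnSymbol j = a) := rfl

@[simp] theorem extendMatrix_inr_inl (M : ι → κ → Bool) (i : ι) (b : α) :
    extendMatrix M (.inr i) (.inl b) = false := rfl

@[simp] theorem extendMatrix_inr_inr (M : ι → κ → Bool) (i : ι) (b : α) (c : κ) :
    extendMatrix M (.inr i) (.inr (b, c)) = M i c := rfl

theorem filter_extendMatrix_inr {M : ι → κ → Bool} {S : Finset (α ⊕ α × κ)} {a : α}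
    (hS : ∀ j ∈ S, columnSymbol j = a) (i : ι) :
    S.filter (fun j => extendMatrix M (.inr i) j = true) =
      ((S.preimage (lowerColumn a) (lowerColumn a).injective.injOn).filter
        (fun c => M i c = true)).map (lowerColumn a) := by
  ext (b | ⟨b, c⟩)
  · simp
  · simp only [mem_filter, mem_map, mem_preimage, lowerColumn_apply, extendMatrix_inr_inr]
    constructor
    · rintro ⟨hj, hMc⟩
      obtain rfl : b = a := hS _ hj
      exact ⟨c, ⟨hj, hMc⟩, rfl⟩
    · rintro ⟨c', ⟨hc', hMc⟩, he⟩
      obtain ⟨rfl, rfl⟩ : a = b ∧ c' = c := by simpa using he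
      exact ⟨hc', hMc⟩

theorem decodable_extendMatrix {M : ι → κ → Bool} (hM : Decodable M 3) :
    Decodable (extendMatrix (α := α) M) 3 := by
  intro S hS hS3
  by_cases hfib : ∃ a, (S.filter (columnSymbol · = a)).card = 1
  · obtain ⟨a, ha⟩ := hfib
    exact ⟨.inl a, by simpa using ha⟩
  push Not at hfib
  obtain ⟨j₀, hj₀⟩ := hS
  set a := columnSymbol j₀
  have hsym : ∀ j ∈ S, columnSymbol j = a := fun j hj =>
    apply_eq_of_card_filter_ne_one columnSymbol hS3 hfib hj hj₀
  set C := S.preimage (lowerColumn a) (lowerColumn a).injective.injOn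
  have hCS : C.map (lowerColumn a) ⊆ S := map_subset_iff_subset_preimage.2 subset_rfl
  have hCne : C.Nonempty := by
    rw [nonempty_iff_ne_empty]
    intro hC
    have hSa : S ⊆ {.inl a} := by
      rintro (b | ⟨b, c⟩) hj
      · simpa [columnSymbol] using hsym _ hj
      · have : c ∈ C := by simpa [C, ← hsym _ hj, columnSymbol] using hj
        simp [hC] at this
    have hS1 : S.card ≠ 1 := by simpa [filter_true_of_mem hsym] using hfib a
    have hle := card_le_card hSa
    rw [card_singleton] at hle
    have := card_pos.2 ⟨j₀, hj₀⟩
    omega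
  obtain ⟨i, hi⟩ := hM C hCne ((card_map _).symm.trans_le (card_le_card hCS) |>.trans hS3)
  exact ⟨.inr i, by rw [filter_extendMatrix_inr hsym, card_map, hi]⟩

end Extension

def constructionWidth : ℕ → ℕ
  | 0 => 0
  | 1 => 1
  | 2 => 2
  | m + 3 => 3 + 3 * constructionWidth m

theorem exists_decodable_three :
    ∀ m, ∃ M : Fin m → Fin (constructionWidth m) → Bool, Decodable M 3
  | 0 => ⟨_, decodable_decide_eq 3⟩
  | 1 => ⟨_, decodable_decide_eq 3⟩
  | 2 => ⟨_, decodable_decide_eq 3⟩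
  | m + 3 => by
    obtain ⟨M, hM⟩ := exists_decodable_three m
    let rows : Fin (m + 3) ≃ Fin 3 ⊕ Fin m := Fintype.equivOfCardEq (by simp [add_comm])
    let cols : Fin (constructionWidth (m + 3)) ≃ Fin 3 ⊕ Fin 3 × Fin (constructionWidth m) :=
      Fintype.equivOfCardEq <| by
        simp only [Fintype.card_fin, Fintype.card_sum, Fintype.card_prod]
        rfl
    exact ⟨_, (decodable_extendMatrix (α := Fin 3) hM).comp rows.surjective cols.toEmbedding⟩

theorem mStar_three_le {n m : ℕ} (hn : n ≤ constructionWidth m) : mStar n 3 ≤ m := by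
  obtain ⟨M, hM⟩ := exists_decodable_three m
  simpa using mStar_le_of_decodable hM (Fin.castLEEmb hn)

theorem three_pow_le_constructionWidth_pow : ∀ m, 3 ≤ m → 3 ^ m ≤ constructionWidth m ^ 3
  | 3, _ | 4, _ | 5, _ => by norm_num [constructionWidth]
  | m + 6, _ => by
    have ih := three_pow_le_constructionWidth_pow (m + 3) (by omega)
    calc 3 ^ (m + 6) = 27 * 3 ^ (m + 3) := by ring
      _ ≤ 27 * constructionWidth (m + 3) ^ 3 := by gcongr
      _ = (3 * constructionWidth (m + 3)) ^ 3 := by ring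
      _ ≤ constructionWidth (m + 6) ^ 3 := by
        gcongr
        change _ ≤ 3 + 3 * _
        omega

theorem pow_three_le_three_pow_of_logb_le {n m : ℕ} (hn : 0 < n)
    (h : (3 / Real.logb 2 3) * Real.logb 2 n ≤ m) : n ^ 3 ≤ 3 ^ m := by
  have hlog : 3 * Real.log n ≤ m * Real.log 3 := by
    have : (3 / Real.logb 2 3) * Real.logb 2 n = 3 * Real.log n / Real.log 3 := by
      unfold Real.logb
      field_simp
    rwa [this, div_le_iff₀ (Real.log_pos (by norm_num))] at h
  have : Real.log ((n : ℝ) ^ 3) ≤ Real.log ((3 : ℝ) ^ m) := by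
    rw [Real.log_pow, Real.log_pow]
    push_cast
    exact hlog
  exact_mod_cast (Real.log_le_log_iff (by positivity) (by positivity)).1 this

theorem mStar_three_upper (n : ℕ) (hn : 3 ≤ n) :
    mStar n 3 ≤ ⌈(3 / Real.logb 2 3) * Real.logb 2 n⌉₊ := by
  set m := ⌈(3 / Real.logb 2 3) * Real.logb 2 n⌉₊
  have hpow : n ^ 3 ≤ 3 ^ m := pow_three_le_three_pow_of_logb_le (by omega) (Nat.le_ceil _)
  have hm : 3 ≤ m := by
    by_contra! hm
    have : 3 ^ m ≤ 3 ^ 2 := Nat.pow_le_pow_right (by norm_num) (by omega)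
    have : 3 ^ 3 ≤ n ^ 3 := Nat.pow_le_pow_left hn 3
    omega
  apply mStar_three_le
  exact (Nat.pow_le_pow_iff_left (by norm_num)).1
    (hpow.trans (three_pow_le_constructionWidth_pow m hm))
end

section
/- If d < n < 1.5(d+1), then m*(n,d) = n − 1: every d-decodable matrix with n columns in this range has at least n−1 rows, and n−1 rows suffice via the identity matrix with an appended all-ones column. -/
open Finset

lemma zmod2_one (a : ZMod 2) (h : a ≠ 0) : a = 1 := by revert a; decide

lemma support_card {m n d : ℕ} {M : Fin m → Fin n → Bool} (hM : IsDecodable M d)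
    {x : Fin n → ZMod 2} (hx : x ≠ 0)
    (hker : ∀ i : Fin m, ∑ j, (if M i j then x j else 0) = 0) :
    d + 1 ≤ (Finset.univ.filter fun j => x j ≠ 0).card := by
  set S := Finset.univ.filter fun j => x j ≠ 0 with hS
  have hSne : S.Nonempty := by
    rcases Function.ne_iff.mp hx with ⟨j, hj⟩
    exact ⟨j, by simp only [hS, Finset.mem_filter, Finset.mem_univ, true_and]; simpa using hj⟩
  by_contra hlt
  push_neg at hlt
  obtain ⟨i, hi⟩ := hM S hSne (by omega)
  obtain ⟨a, ha⟩ := Finset.card_eq_one.mp hi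
  have haS : a ∈ S.filter (fun j => M i j = true) := ha ▸ Finset.mem_singleton_self a
  have hcalc : ∑ j, (if M i j then x j else 0) = 1 := by
    calc ∑ j, (if M i j then x j else 0)
        = ∑ j ∈ univ.filter (fun j => M i j = true), x j := (Finset.sum_filter _ _).symm
      _ = ∑ j ∈ (univ.filter (fun j => M i j = true)).filter (fun j => x j ≠ 0), x j :=
          (Finset.sum_filter_ne_zero _).symm
      _ = ∑ j ∈ S.filter (fun j => M i j = true), x j := by
          rw [hS, Finset.filter_comm]
      _ = x a := by rw [ha, Finset.sum_singleton]
      _ = 1 := zmod2_one _ (by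
            have := (Finset.mem_filter.mp haS).1
            rw [hS, Finset.mem_filter] at this
            exact this.2)
  rw [hker i] at hcalc
  exact one_ne_zero hcalc.symm

lemma zmod2_add_eq (a b : ZMod 2) (h : a + b = 0) : a = b := by revert a b; decide

lemma zmod2_add_iff (a b : ZMod 2) : a + b ≠ 0 ↔ ((a ≠ 0 ∨ b ≠ 0) ∧ ¬(a ≠ 0 ∧ b ≠ 0)) := by
  revert a b; decide

lemma lower_bound {m n d : ℕ} (h₁ : d < n) (h₂ : 2 * n < 3 * (d + 1))
    (M : Fin m → Fin n → Bool) (hM : IsDecodable M d) : n - 1 ≤ m := by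
  by_contra hcon
  push_neg at hcon
  have hmn : m + 2 ≤ n := by omega
  set A : Matrix (Fin m) (Fin n) (ZMod 2) := fun i j => if M i j then 1 else 0 with hA
  set f := A.mulVecLin with hf
  have kermem : ∀ x, x ∈ LinearMap.ker f → ∀ i, ∑ j, (if M i j then x j else 0) = 0 := by
    intro x hx i
    have hx0 : A.mulVec x = 0 := by
      have := LinearMap.mem_ker.mp hx
      rwa [hf, Matrix.mulVecLin_apply] at this
    have := congrFun hx0 i
    simpa [Matrix.mulVec, dotProduct, hA, ite_mul] using this
  have hrange : Module.finrank (ZMod 2) (LinearMap.range f) ≤ m := by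
    have := Submodule.finrank_le (LinearMap.range f)
    rwa [Module.finrank_fin_fun] at this
  have hrn := LinearMap.finrank_range_add_finrank_ker f
  rw [Module.finrank_fin_fun] at hrn
  have hker2 : 2 ≤ Module.finrank (ZMod 2) (LinearMap.ker f) := by omega
  have hne : LinearMap.ker f ≠ ⊥ := by
    intro h
    rw [h, finrank_bot] at hker2
    omega
  obtain ⟨v, hv, hv0⟩ := (Submodule.ne_bot_iff _).mp hne
  obtain ⟨w, hw, hw0, hwv⟩ : ∃ w ∈ LinearMap.ker f, w ≠ 0 ∧ w ≠ v := by
    by_contra hc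
    push_neg at hc
    have hle : LinearMap.ker f ≤ Submodule.span (ZMod 2) {v} := by
      intro u hu
      rcases eq_or_ne u 0 with rfl | hu0
      · exact Submodule.zero_mem _
      · rw [hc u hu hu0]
        exact Submodule.mem_span_singleton_self v
    have := Submodule.finrank_mono hle
    rw [finrank_span_singleton hv0] at this
    omega
  have hz : v + w ∈ LinearMap.ker f := Submodule.add_mem _ hv hw
  have hz0 : v + w ≠ 0 := fun h => hwv (funext fun j =>
    (zmod2_add_eq (v j) (w j) (by simpa using congrFun h j))).symm
  have hx1 := support_card hM hv0 (kermem v hv)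
  have hy1 := support_card hM hw0 (kermem w hw)
  have hz1 := support_card hM hz0 (kermem _ hz)
  set Sx := Finset.univ.filter (fun j => v j ≠ 0) with hSx
  set Sy := Finset.univ.filter (fun j => w j ≠ 0) with hSy
  set Sz := Finset.univ.filter (fun j => (v + w) j ≠ 0) with hSz
  have hz_eq : Sz = (Sx ∪ Sy) \ (Sx ∩ Sy) := by
    ext j
    simp only [hSx, hSy, hSz, Finset.mem_filter, Finset.mem_univ, true_and,
      Finset.mem_sdiff, Finset.mem_union, Finset.mem_inter, Pi.add_apply, zmod2_add_iff]
  have hsub : Sx ∩ Sy ⊆ Sx ∪ Sy := Finset.inter_subset_left.trans Finset.subset_union_left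
  have h1 := Finset.card_union_add_card_inter Sx Sy
  have h2 : Sz.card = (Sx ∪ Sy).card - (Sx ∩ Sy).card := by
    rw [hz_eq, Finset.card_sdiff_of_subset hsub]
  have h3 : (Sx ∪ Sy).card ≤ n := by
    have := Finset.card_le_card (Finset.subset_univ (Sx ∪ Sy))
    simpa using this
  have h4 : (Sx ∩ Sy).card ≤ (Sx ∪ Sy).card := Finset.card_le_card hsub
  omega

lemma construction (n d : ℕ) (hd : d < n) :
    ∃ M : Fin (n-1) → Fin n → Bool, IsDecodable M d := by
  refine ⟨fun i j => decide (j.val = i.val ∨ j.val = n - 1), ?_⟩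
  intro S hS hSd
  have hn : 1 ≤ n := by omega
  by_cases hlast : (⟨n-1, by omega⟩ : Fin n) ∈ S
  · have hj : ∃ j : Fin n, j ∉ S := by
      by_contra h
      push_neg at h
      have hsub : (Finset.univ : Finset (Fin n)) ⊆ S := fun j _ => h j
      have := Finset.card_le_card hsub
      simp only [Finset.card_univ, Fintype.card_fin] at this
      omega
    obtain ⟨j, hjS⟩ := hj
    have hjv : j.val < n - 1 := by
      have h1 := j.isLt
      have h2 : j.val ≠ n - 1 := fun h =>
        hjS ((Fin.ext h : j = (⟨n-1, by omega⟩ : Fin n)) ▸ hlast)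
      omega
    refine ⟨⟨j.val, hjv⟩, ?_⟩
    rw [Finset.card_eq_one]
    refine ⟨⟨n-1, by omega⟩, ?_⟩
    ext k
    simp only [Finset.mem_filter, Finset.mem_singleton, decide_eq_true_eq]
    constructor
    · rintro ⟨hkS, hk | hk⟩
      · exact absurd ((Fin.ext hk : k = j) ▸ hkS) hjS
      · exact Fin.ext hk
    · rintro rfl
      exact ⟨hlast, Or.inr rfl⟩
  · obtain ⟨j, hjS⟩ := hS
    have hjv : j.val < n - 1 := by
      have h1 := j.isLt
      have h2 : j.val ≠ n - 1 := fun h =>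
        hlast ((Fin.ext h : j = (⟨n-1, by omega⟩ : Fin n)) ▸ hjS)
      omega
    refine ⟨⟨j.val, hjv⟩, ?_⟩
    rw [Finset.card_eq_one]
    refine ⟨j, ?_⟩
    ext k
    simp only [Finset.mem_filter, Finset.mem_singleton, decide_eq_true_eq]
    constructor
    · rintro ⟨hkS, hk | hk⟩
      · exact Fin.ext hk
      · exact absurd ((Fin.ext hk : k = (⟨n-1, by omega⟩ : Fin n)) ▸ hkS) hlast
    · rintro rfl
      exact ⟨hjS, Or.inl rfl⟩

theorem plotkin_range (n d : ℕ) (h₁ : d < n) (h₂ : 2 * n < 3 * (d + 1)) :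
    mStar n d = n - 1 := by
  have hmem : (n - 1) ∈ {m | ∃ M : Fin m → Fin n → Bool, IsDecodable M d} :=
    construction n d h₁
  refine le_antisymm (Nat.sInf_le hmem) (le_csInf ⟨_, hmem⟩ ?_)
  rintro m ⟨M, hM⟩
  exact lower_bound h₁ h₂ M hM
end

section
/- For any integer n ≥ 1, m*(n, d=3, k=2) = min{m : C(m,2) − K(m,2,3,1) ≥ n}, where K(m,2,3,1) is the minimum number of weight-2 binary vectors of length m such that every weight-3 vector of length m is at Hamming distance at most 1 from one of them. In particular, a set of weight-2 columns of length m is 3-decodable if and only if for every 3-subset {i,j,l} of coordinates, not all three vectors e_i+e_j, e_i+e_l, e_j+e_l are among the columns. -/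
/-- Hamming weight of a binary vector. -/
def wt {m : ℕ} (v : Fin m → Bool) : ℕ :=
  (Finset.univ.filter (fun i => v i = true)).card

/-- Hamming distance between two binary vectors. -/
def hamDist {m : ℕ} (v w : Fin m → Bool) : ℕ :=
  (Finset.univ.filter (fun i => v i ≠ w i)).card

/-- `K(m,2,3,1)`: the minimum number of weight-2 binary vectors of length `m`
such that every weight-3 vector of length `m` is at Hamming distance at most 1
from one of them. -/
noncomputable def turanK (m : ℕ) : ℕ :=
  sInf {c | ∃ A : Finset (Fin m → Bool), A.card = c ∧ (∀ v ∈ A, wt v = 2) ∧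
    ∀ w : Fin m → Bool, wt w = 3 → ∃ v ∈ A, hamDist v w ≤ 1}

/-- `M` is `(d,k)`-decodable: `d`-decodable and every column has weight exactly `k`. -/
def IsDecodableK {m n : ℕ} (M : Fin m → Fin n → Bool) (d k : ℕ) : Prop :=
  IsDecodable M d ∧ ∀ j, (Finset.univ.filter (fun i => M i j = true)).card = k

/-- `m*(n,d,k)`: minimum number of rows of a `(d,k)`-decodable matrix with `n` columns. -/
noncomputable def mStarK (n d k : ℕ) : ℕ :=
  sInf {m | ∃ M : Fin m → Fin n → Bool, IsDecodableK M d k}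

/-- The weight-2 vector with ones exactly at coordinates `a` and `b`. -/
def pairVec {m : ℕ} (a b : Fin m) : Fin m → Bool :=
  fun x => decide (x = a) || decide (x = b)

/-!
A weight-2 column is an edge of a graph on the `m` rows, and a row meets a set of columns exactly
once iff it has degree one in the corresponding edge set. One or two distinct edges always leave a
vertex of degree one, and three edges without one form a triangle, so a set of weight-2 columns is
3-decodable exactly when its graph is triangle-free. A weight-2 vector is within distance one of a
weight-3 vector iff its edge lies in the triple the latter spans, so `K(m,2,3,1)` is the least
number of edges meeting every triangle. Such edge sets are exactly the complements of triangle-free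
graphs, so the largest triangle-free graph on `m` vertices has `C(m,2) - K(m,2,3,1)` edges.
-/

open Finset Function

section

variable {m n : ℕ}

def supp (v : Fin m → Bool) : Finset (Fin m) := univ.filter (v · = true)

@[simp] lemma mem_supp {v : Fin m → Bool} {i : Fin m} : i ∈ supp v ↔ v i = true := by
  simp [supp]

lemma wt_eq_card_supp (v : Fin m → Bool) : wt v = #(supp v) := rfl

def suppEquiv : (Fin m → Bool) ≃ Finset (Fin m) where
  toFun := supp
  invFun s i := decide (i ∈ s)
  left_inv v := by funext i; simp
  right_inv s := by ext i; simp

lemma supp_injective : Injective (supp (m := m)) := suppEquiv.injective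

@[simp] lemma pairVec_apply {a b x : Fin m} : pairVec a b x = true ↔ x = a ∨ x = b := by
  simp [pairVec]

lemma supp_pairVec (a b : Fin m) : supp (pairVec a b) = {a, b} := by
  ext; simp

lemma pairVec_comm (a b : Fin m) : pairVec a b = pairVec b a :=
  supp_injective (by rw [supp_pairVec, supp_pairVec, pair_comm])

lemma eq_of_pairVec_eq_pairVec {a b c : Fin m} (hab : a ≠ b) (h : pairVec a b = pairVec a c) :
    b = c :=
  (pairVec_apply.1 (h ▸ pairVec_apply.2 (Or.inr rfl))).resolve_left hab.symm

lemma wt_pairVec {a b : Fin m} (hab : a ≠ b) : wt (pairVec a b) = 2 := by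
  rw [wt_eq_card_supp, supp_pairVec, card_pair hab]

lemma wt_eq_two_iff {v : Fin m → Bool} : wt v = 2 ↔ ∃ a b, a ≠ b ∧ v = pairVec a b := by
  refine ⟨fun h => ?_, fun ⟨a, b, hab, hv⟩ => hv ▸ wt_pairVec hab⟩
  obtain ⟨a, b, hab, hs⟩ := card_eq_two.1 h
  exact ⟨a, b, hab, supp_injective (hs.trans (supp_pairVec a b).symm)⟩

lemma exists_eq_pairVec_of_wt_eq_two {v : Fin m → Bool} (hv : wt v = 2) {a : Fin m}
    (ha : v a = true) : ∃ c, a ≠ c ∧ v = pairVec a c := by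
  obtain ⟨x, y, hxy, rfl⟩ := wt_eq_two_iff.1 hv
  rcases pairVec_apply.1 ha with rfl | rfl
  · exact ⟨y, hxy, rfl⟩
  · exact ⟨x, hxy.symm, pairVec_comm _ _⟩

lemma eq_pairVec_of_wt_eq_two {v : Fin m → Bool} (hv : wt v = 2) {a b : Fin m} (hab : a ≠ b)
    (ha : v a = true) (hb : v b = true) : v = pairVec a b := by
  obtain ⟨c, -, rfl⟩ := exists_eq_pairVec_of_wt_eq_two hv ha
  obtain rfl | rfl := pairVec_apply.1 hb
  · exact absurd rfl hab
  · rfl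

lemma eq_pairVec_of_supp_subset {v : Fin m → Bool} (hv : wt v = 2) {a b c : Fin m}
    (h : supp v ⊆ {a, b, c}) : v = pairVec a b ∨ v = pairVec a c ∨ v = pairVec b c := by
  obtain ⟨x, y, hxy, rfl⟩ := wt_eq_two_iff.1 hv
  rw [supp_pairVec, insert_subset_iff, singleton_subset_iff] at h
  simp only [mem_insert, mem_singleton] at h
  obtain ⟨rfl | rfl | rfl, rfl | rfl | rfl⟩ := h <;> simp_all [pairVec_comm]

lemma card_sdiff_add_card_sdiff_le_one_iff {α : Type*} [DecidableEq α] {s t : Finset α}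
    (h : #s + 1 = #t) : #(s \ t) + #(t \ s) ≤ 1 ↔ s ⊆ t := by
  have hs := card_sdiff_add_card_inter s t
  have ht := card_sdiff_add_card_inter t s
  rw [inter_comm] at ht
  rw [← sdiff_eq_empty_iff_subset, ← card_eq_zero]
  omega

lemma hamDist_eq (v w : Fin m → Bool) :
    hamDist v w = #(supp v \ supp w) + #(supp w \ supp v) := by
  rw [← card_union_of_disjoint disjoint_sdiff_sdiff, hamDist]
  congr 1
  ext i
  simp only [mem_filter, mem_univ, true_and, mem_union, mem_sdiff, mem_supp]
  cases v i <;> cases w i <;> decide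

lemma hamDist_le_one_iff {v w : Fin m → Bool} (hv : wt v = 2) (hw : wt w = 3) :
    hamDist v w ≤ 1 ↔ supp v ⊆ supp w := by
  have hcard : #(supp v) + 1 = #(supp w) := by rw [← wt_eq_card_supp, ← wt_eq_card_supp, hv, hw]
  rw [hamDist_eq, card_sdiff_add_card_sdiff_le_one_iff hcard]

def TriangleFree (cols : Finset (Fin m → Bool)) : Prop :=
  ∀ a b c : Fin m, a ≠ b → a ≠ c → b ≠ c →
    ¬(pairVec a b ∈ cols ∧ pairVec a c ∈ cols ∧ pairVec b c ∈ cols)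

def MeetsEveryTriangle (A : Finset (Fin m → Bool)) : Prop :=
  ∀ a b c : Fin m, a ≠ b → a ≠ c → b ≠ c →
    pairVec a b ∈ A ∨ pairVec a c ∈ A ∨ pairVec b c ∈ A

lemma TriangleFree.mono {s t : Finset (Fin m → Bool)} (ht : TriangleFree t) (hst : s ⊆ t) :
    TriangleFree s :=
  fun a b c hab hac hbc ⟨h₁, h₂, h₃⟩ => ht a b c hab hac hbc ⟨hst h₁, hst h₂, hst h₃⟩

def allPairs (m : ℕ) : Finset (Fin m → Bool) := univ.filter (wt · = 2)

@[simp] lemma mem_allPairs {v : Fin m → Bool} : v ∈ allPairs m ↔ wt v = 2 := by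
  simp [allPairs]

lemma subset_allPairs_iff {cols : Finset (Fin m → Bool)} :
    cols ⊆ allPairs m ↔ ∀ v ∈ cols, wt v = 2 := by
  simp [subset_iff]

lemma card_allPairs : #(allPairs m) = m.choose 2 := by
  have : #(powersetCard 2 (univ : Finset (Fin m))) = m.choose 2 := by simp
  rw [← this, powersetCard_eq_filter, powerset_univ]
  exact card_equiv suppEquiv fun v => by simp [wt_eq_card_supp, suppEquiv]

lemma triangleFree_allPairs_sdiff_iff (A : Finset (Fin m → Bool)) :
    TriangleFree (allPairs m \ A) ↔ MeetsEveryTriangle A := by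
  refine forall₃_congr fun a b c => forall₃_congr fun hab hac hbc => ?_
  simp only [mem_sdiff, mem_allPairs, wt_pairVec hab, wt_pairVec hac, wt_pairVec hbc]
  tauto

def IsTuranCover (A : Finset (Fin m → Bool)) : Prop :=
  (∀ v ∈ A, wt v = 2) ∧ ∀ w : Fin m → Bool, wt w = 3 → ∃ v ∈ A, hamDist v w ≤ 1

lemma isTuranCover_iff {A : Finset (Fin m → Bool)} :
    IsTuranCover A ↔ A ⊆ allPairs m ∧ MeetsEveryTriangle A := by
  rw [IsTuranCover, subset_allPairs_iff]
  refine and_congr_right fun hA => ⟨fun hcover a b c hab hac hbc => ?_, fun hmeets w hw => ?_⟩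
  · have hsupp : supp (suppEquiv.symm {a, b, c}) = {a, b, c} := suppEquiv.apply_symm_apply _
    have hw : wt (suppEquiv.symm {a, b, c}) = 3 := by
      rw [wt_eq_card_supp, hsupp, card_eq_three]
      exact ⟨a, b, c, hab, hac, hbc, rfl⟩
    obtain ⟨v, hvA, hv⟩ := hcover _ hw
    rw [hamDist_le_one_iff (hA v hvA) hw, hsupp] at hv
    rcases eq_pairVec_of_supp_subset (hA v hvA) hv with rfl | rfl | rfl <;> simp [hvA]
  · obtain ⟨a, b, c, hab, hac, hbc, hsupp⟩ := card_eq_three.1 (show #(supp w) = 3 from hw)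
    rcases hmeets a b c hab hac hbc with h | h | h <;>
      refine ⟨_, h, (hamDist_le_one_iff (hA _ h) hw).2 ?_⟩ <;>
      rw [supp_pairVec, hsupp] <;> simp [insert_subset_iff]

lemma turanK_le {A : Finset (Fin m → Bool)} (hA : IsTuranCover A) : turanK m ≤ #A :=
  Nat.sInf_le ⟨A, rfl, hA⟩

lemma exists_isTuranCover_card_eq_turanK :
    ∃ A : Finset (Fin m → Bool), IsTuranCover A ∧ #A = turanK m := by
  have hall : IsTuranCover (allPairs m) :=
    isTuranCover_iff.2 ⟨subset_rfl, fun a b c hab _ _ => Or.inl (mem_allPairs.2 (wt_pairVec hab))⟩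
  obtain ⟨A, hA, hcover⟩ := Nat.sInf_mem
    (s := {c | ∃ A : Finset (Fin m → Bool), #A = c ∧ IsTuranCover A}) ⟨_, allPairs m, rfl, hall⟩
  exact ⟨A, hcover, hA⟩

lemma exists_triangleFree_card_eq_iff :
    (∃ cols : Finset (Fin m → Bool), #cols = n ∧ cols ⊆ allPairs m ∧ TriangleFree cols) ↔
      n ≤ m.choose 2 - turanK m := by
  constructor
  · rintro ⟨cols, rfl, hsub, hfree⟩
    have hcover : IsTuranCover (allPairs m \ cols) := by
      rw [isTuranCover_iff, ← triangleFree_allPairs_sdiff_iff, Finset.sdiff_sdiff_eq_self hsub]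
      exact ⟨sdiff_subset, hfree⟩
    have := turanK_le hcover
    rw [card_sdiff_of_subset hsub, card_allPairs] at this
    have := card_allPairs (m := m) ▸ card_le_card hsub
    omega
  · intro hn
    obtain ⟨A, hA, hcard⟩ := exists_isTuranCover_card_eq_turanK (m := m)
    obtain ⟨hsub, hmeets⟩ := isTuranCover_iff.1 hA
    obtain ⟨cols, hcols, rfl⟩ := exists_subset_card_eq
      (s := allPairs m \ A) (n := n) (by rwa [card_sdiff_of_subset hsub, card_allPairs, hcard])
    exact ⟨_, rfl, hcols.trans sdiff_subset,
      ((triangleFree_allPairs_sdiff_iff A).2 hmeets).mono hcols⟩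

def IsDecodableFamily (cols : Finset (Fin m → Bool)) (d : ℕ) : Prop :=
  ∀ S ⊆ cols, S.Nonempty → #S ≤ d → ∃ i : Fin m, #(S.filter (· i = true)) = 1

lemma exists_mem_ne_of_card_filter_ne_one {α : Type*} {S : Finset α} {p : α → Prop}
    [DecidablePred p] {u : α} (hu : u ∈ S) (hpu : p u) (h : #(S.filter p) ≠ 1) :
    ∃ v ∈ S, v ≠ u ∧ p v := by
  by_contra! H
  refine h (card_eq_one.2 ⟨u, ?_⟩)
  ext v
  simp only [mem_filter, mem_singleton]
  exact ⟨fun ⟨hv, hpv⟩ => by_contra fun hvu => H v hv hvu hpv, by rintro rfl; exact ⟨hu, hpu⟩⟩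

lemma card_filter_triangle_ne_one {a b c : Fin m} (hab : a ≠ b) (hac : a ≠ c) (hbc : b ≠ c)
    (i : Fin m) :
    #(({pairVec a b, pairVec a c, pairVec b c} : Finset (Fin m → Bool)).filter
      (· i = true)) ≠ 1 := by
  set T : Finset (Fin m → Bool) := {pairVec a b, pairVec a c, pairVec b c}
  intro h
  obtain ⟨v, hv⟩ := card_eq_one.1 h
  have hpair : ∀ u ∈ T, ∀ u' ∈ T, u i = true → u' i = true → u = u' :=
    fun u hu u' hu' hui hu'i => (mem_singleton.1 (hv ▸ mem_filter.2 ⟨hu, hui⟩)).trans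
      (mem_singleton.1 (hv ▸ mem_filter.2 ⟨hu', hu'i⟩)).symm
  by_cases hia : i = a
  · subst i
    refine hbc (eq_of_pairVec_eq_pairVec hab ?_)
    exact hpair _ (by simp [T]) _ (by simp [T]) (by simp) (by simp)
  by_cases hib : i = b
  · subst i
    refine hac (eq_of_pairVec_eq_pairVec hab.symm ?_)
    rw [pairVec_comm]
    exact hpair _ (by simp [T]) _ (by simp [T]) (by simp) (by simp)
  by_cases hic : i = c
  · subst i
    refine hab (eq_of_pairVec_eq_pairVec hac.symm ?_)
    rw [pairVec_comm c a, pairVec_comm c b]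
    exact hpair _ (by simp [T]) _ (by simp [T]) (by simp) (by simp)
  have hvi : v ∈ T.filter (· i = true) := hv ▸ mem_singleton_self v
  simp only [T, mem_filter, mem_insert, mem_singleton] at hvi
  obtain ⟨rfl | rfl | rfl, hvi⟩ := hvi <;> simp_all

lemma exists_triangle_of_card_filter_ne_one {S : Finset (Fin m → Bool)}
    (hS : ∀ v ∈ S, wt v = 2) (hne : S.Nonempty) (hS3 : #S ≤ 3)
    (hrow : ∀ i, #(S.filter (· i = true)) ≠ 1) :
    ∃ a b c, a ≠ b ∧ a ≠ c ∧ b ≠ c ∧ pairVec a b ∈ S ∧ pairVec a c ∈ S ∧ pairVec b c ∈ S := by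
  obtain ⟨x, hx⟩ := hne
  obtain ⟨a, b, hab, rfl⟩ := wt_eq_two_iff.1 (hS x hx)
  obtain ⟨y, hy, hyx, hya⟩ :=
    exists_mem_ne_of_card_filter_ne_one hx (pairVec_apply.2 (Or.inl rfl)) (hrow a)
  obtain ⟨c, hac, rfl⟩ := exists_eq_pairVec_of_wt_eq_two (hS y hy) hya
  have hbc : b ≠ c := by rintro rfl; exact hyx rfl
  obtain ⟨z, hz, hzx, hzb⟩ :=
    exists_mem_ne_of_card_filter_ne_one hx (pairVec_apply.2 (Or.inr rfl)) (hrow b)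
  have hzy : z ≠ pairVec a c := by
    rintro rfl
    obtain h | h := pairVec_apply.1 hzb
    exacts [hab h.symm, hbc h]
  have hS_eq : S = {pairVec a b, pairVec a c, z} :=
    (eq_of_subset_of_card_le (by simp [insert_subset_iff, hx, hy, hz])
      (hS3.trans (card_eq_three.2 ⟨_, _, _, hyx.symm, hzx.symm, hzy.symm, rfl⟩).ge)).symm
  obtain ⟨w, hw, hwy, hwc⟩ :=
    exists_mem_ne_of_card_filter_ne_one hy (pairVec_apply.2 (Or.inr rfl)) (hrow c)
  have hwz : w = z := by
    rw [hS_eq] at hw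
    simp only [mem_insert, mem_singleton] at hw
    rcases hw with rfl | rfl | rfl
    · simp [hac.symm, hbc.symm] at hwc
    · exact absurd rfl hwy
    · rfl
  subst hwz
  exact ⟨a, b, c, hab, hac, hbc, hx, hy, eq_pairVec_of_wt_eq_two (hS w hz) hbc hzb hwc ▸ hz⟩

theorem isDecodableFamily_three_iff_triangleFree {cols : Finset (Fin m → Bool)}
    (hcols : ∀ v ∈ cols, wt v = 2) : IsDecodableFamily cols 3 ↔ TriangleFree cols := by
  refine ⟨fun hdec a b c hab hac hbc ⟨h₁, h₂, h₃⟩ => ?_, fun hfree S hS hne hS3 => ?_⟩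
  · obtain ⟨i, hi⟩ := hdec {pairVec a b, pairVec a c, pairVec b c}
      (by simp [insert_subset_iff, h₁, h₂, h₃]) (insert_nonempty _ _) card_le_three
    exact card_filter_triangle_ne_one hab hac hbc i hi
  · by_contra! hrow
    obtain ⟨a, b, c, hab, hac, hbc, h₁, h₂, h₃⟩ :=
      exists_triangle_of_card_filter_ne_one (fun v hv => hcols v (hS hv)) hne hS3 hrow
    exact hfree a b c hab hac hbc ⟨hS h₁, hS h₂, hS h₃⟩

lemma IsDecodable.injective_swap {M : Fin m → Fin n → Bool} {d : ℕ} (hM : IsDecodable M d)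
    (hd : 2 ≤ d) : Injective (swap M) := by
  intro j j' hjj'
  by_contra hne
  obtain ⟨i, hi⟩ := hM {j, j'} (insert_nonempty _ _) ((card_pair hne).le.trans hd)
  have hrow : M i j = M i j' := congrFun hjj' i
  rw [filter_insert, filter_singleton, hrow] at hi
  split_ifs at hi <;> simp_all [card_pair hne]

lemma isDecodable_iff_isDecodableFamily {M : Fin m → Fin n → Bool} {d : ℕ}
    (hM : Injective (swap M)) : IsDecodable M d ↔ IsDecodableFamily (univ.image (swap M)) d := by
  refine ⟨fun h S hS hne hSd => ?_, fun h T hne hTd => ?_⟩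
  · obtain ⟨T, -, rfl⟩ := subset_image_iff.1 hS
    rw [card_image_of_injective _ hM] at hSd
    obtain ⟨i, hi⟩ := h T (image_nonempty.1 hne) hSd
    exact ⟨i, by rwa [filter_image, card_image_of_injective _ hM]⟩
  · obtain ⟨i, hi⟩ := h (T.image (swap M)) (image_subset_image (subset_univ T)) (hne.image _)
      (by rwa [card_image_of_injective _ hM])
    exact ⟨i, by rwa [filter_image, card_image_of_injective _ hM] at hi⟩

lemma exists_isDecodableK_iff {d k : ℕ} (hd : 2 ≤ d) :
    (∃ M : Fin m → Fin n → Bool, IsDecodableK M d k) ↔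
      ∃ cols : Finset (Fin m → Bool), #cols = n ∧ (∀ v ∈ cols, wt v = k) ∧
        IsDecodableFamily cols d := by
  constructor
  · rintro ⟨M, hdec, hwt⟩
    have hM := hdec.injective_swap hd
    refine ⟨univ.image (swap M), by simp [card_image_of_injective _ hM], ?_,
      (isDecodable_iff_isDecodableFamily hM).1 hdec⟩
    simp only [mem_image, mem_univ, true_and, forall_exists_index, forall_apply_eq_imp_iff]
    exact hwt
  · rintro ⟨cols, rfl, hwt, hdec⟩
    let f : Fin #cols → Fin m → Bool := fun j => cols.equivFin.symm j
    have hf : Injective f := Subtype.val_injective.comp cols.equivFin.symm.injective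
    have himage : univ.image f = cols := by
      ext v
      simp only [mem_image, mem_univ, true_and]
      exact ⟨by rintro ⟨j, rfl⟩; exact (cols.equivFin.symm j).2,
        fun hv => ⟨cols.equivFin ⟨v, hv⟩, by simp [f]⟩⟩
    exact ⟨swap f, (isDecodable_iff_isDecodableFamily (M := swap f) hf).2 (himage.symm ▸ hdec),
      fun j => hwt _ (cols.equivFin.symm j).2⟩

end

theorem mStarK_three_two_general (n : ℕ) :
    mStarK n 3 2 = sInf {m : ℕ | n ≤ Nat.choose m 2 - turanK m} ∧
    (∀ m : ℕ, ∀ cols : Finset (Fin m → Bool), (∀ v ∈ cols, wt v = 2) →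
      ((∀ S ⊆ cols, S.Nonempty → S.card ≤ 3 →
          ∃ i : Fin m, (S.filter (fun v => v i = true)).card = 1) ↔
        ∀ a b c : Fin m, a ≠ b → a ≠ c → b ≠ c →
          ¬(pairVec a b ∈ cols ∧ pairVec a c ∈ cols ∧ pairVec b c ∈ cols))) := by
  have hdecode : ∀ (m : ℕ) (cols : Finset (Fin m → Bool)), (∀ v ∈ cols, wt v = 2) →
      (IsDecodableFamily cols 3 ↔ TriangleFree cols) :=
    fun _ _ => isDecodableFamily_three_iff_triangleFree
  refine ⟨?_, hdecode⟩
  unfold mStarK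
  congr 1
  ext m
  rw [Set.mem_ofPred_eq, Set.mem_ofPred_eq, exists_isDecodableK_iff (by norm_num),
    ← exists_triangleFree_card_eq_iff]
  refine exists_congr fun cols => and_congr_right fun _ => ?_
  rw [subset_allPairs_iff]
  exact and_congr_right (hdecode m cols)

theorem mStarK_three_two (n : ℕ) (hn : 1 ≤ n) :
    mStarK n 3 2 = sInf {m : ℕ | n ≤ Nat.choose m 2 - turanK m} ∧
    (∀ m : ℕ, ∀ cols : Finset (Fin m → Bool), (∀ v ∈ cols, wt v = 2) →
      ((∀ S ⊆ cols, S.Nonempty → S.card ≤ 3 →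
          ∃ i : Fin m, (S.filter (fun v => v i = true)).card = 1) ↔
        ∀ a b c : Fin m, a ≠ b → a ≠ c → b ≠ c →
          ¬(pairVec a b ∈ cols ∧ pairVec a c ∈ cols ∧ pairVec b c ∈ cols))) :=
  mStarK_three_two_general n
end
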